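/- arXiv:1309.1319 — 2 statements merged into one kernel-verified Lean document; each statement's English description precedes it below -/
import Mathlib

section
/- Let α be a primitive element of GF(2^L) with minimal polynomial of degree L, let p satisfy α^{p+1} = α^p + 1, and expand α^p in the basis {1, α, ..., α^{L-1}} as α^p = Σ_{j=0}^{L-1} c_j α^j. Then c_{L-1} ≠ 0, i.e., the coefficient of α^{L-1} in the basis expansion of α^p is 1. -/
/-!
If the top coordinate of `α ^ p` vanished, the polynomial `q = ∑ c_j X^j` would have degree
`< L - 1`, so `(X - 1) * q - 1` would have degree `< L`; it vanishes at `α` because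
`α * α ^ p = α ^ p + 1`, hence it is zero by independence of `1, α, …, α ^ (L - 1)`.
But then `X - 1` would be a unit of `(ZMod 2)[X]`.
-/

open Polynomial

namespace Polynomial

variable {R A : Type*} [CommRing R] [Ring A] [Algebra R A] {n : ℕ} {x : A}

theorem eq_zero_of_aeval_eq_zero_of_linearIndependent_pow
    (hx : LinearIndependent R fun j : Fin n => x ^ (j : ℕ)) {q : R[X]} (hq : q.degree < n)
    (h : aeval x q = 0) : q = 0 := by
  by_contra hq0
  have hcoeff : ∀ j : Fin n, q.coeff j = 0 := by
    refine Fintype.linearIndependent_iff.mp hx (fun j => q.coeff j) ?_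
    rw [← h, aeval_eq_sum_range' ((natDegree_lt_iff_degree_lt hq0).mpr hq)]
    exact Fin.sum_univ_eq_sum_range (fun i => q.coeff i • x ^ i) n
  refine hq0 (ext fun m => ?_)
  rw [coeff_zero]
  by_cases hm : m < n
  · exact hcoeff ⟨m, hm⟩
  · exact (degree_lt_iff_coeff_zero q n).mp hq m (not_lt.mp hm)

theorem degree_X_mul_lt {q : R[X]} (hq : q.degree < n) (hlast : q.coeff (n - 1) = 0) :
    (X * q).degree < (n : WithBot ℕ) := by
  rw [degree_lt_iff_coeff_zero] at hq ⊢
  rintro (_ | m) hm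
  · exact coeff_X_mul_zero q
  · rw [coeff_X_mul]
    obtain rfl | hm' : m = n - 1 ∨ n ≤ m := by omega
    · exact hlast
    · exact hq m hm'

theorem coeff_pred_ne_zero_of_mul_aeval_eq_add_one [Nontrivial R]
    (hx : LinearIndependent R fun j : Fin n => x ^ (j : ℕ)) (hn : 0 < n) {q : R[X]}
    (hq : q.degree < n) (hxq : x * aeval x q = aeval x q + 1) : q.coeff (n - 1) ≠ 0 := by
  intro hlast
  have hone : (1 : R[X]).degree < n := degree_one_le.trans_lt (by exact_mod_cast hn)
  have hunit : (X - C 1) * q = 1 := by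
    rw [← sub_eq_zero]
    refine eq_zero_of_aeval_eq_zero_of_linearIndependent_pow hx ?_ ?_
    · rw [map_one, sub_mul, one_mul]
      exact (degree_sub_le _ _).trans_lt <| max_lt
        ((degree_sub_le _ _).trans_lt (max_lt (degree_X_mul_lt hq hlast) hq)) hone
    · simp [sub_mul, hxq]
  exact not_isUnit_X_sub_C (1 : R) (IsUnit.of_mul_eq_one _ hunit)

end Polynomial

/-- Expanding α^p (with α^{p+1} = α^p + 1) in the basis {1, α, ..., α^{L-1}},
the coefficient of α^{L-1} is 1. -/
theorem stmt5 {F : Type*} [Field F] [Algebra (ZMod 2) F] (L : ℕ)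
    (hL : 2 ≤ L) (α : F)
    (hbasis : LinearIndependent (ZMod 2) fun j : Fin L => α ^ (j : ℕ))
    (p : ℕ) (hp : α ^ (p + 1) = α ^ p + 1)
    (c : Fin L → ZMod 2) (hc : α ^ p = ∑ j : Fin L, c j • α ^ (j : ℕ)) :
    c ⟨L - 1, by omega⟩ = 1 := by
  set q : (ZMod 2)[X] := ∑ j : Fin L, C (c j) * X ^ (j : ℕ)
  have hq : aeval α q = α ^ p := by simp [q, hc, Algebra.smul_def]
  have hcoeff : q.coeff (L - 1) = c ⟨L - 1, by omega⟩ := by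
    have hidx : ∀ j : Fin L, L - 1 = (j : ℕ) ↔ ⟨L - 1, by omega⟩ = j := fun j => by
      rw [Fin.ext_iff]
    simp [q, coeff_X_pow, hidx]
  refine Fin.eq_one_of_ne_zero _ ?_
  rw [← hcoeff]
  exact coeff_pred_ne_zero_of_mul_aeval_eq_add_one hbasis (by omega) (degree_sum_fin_lt c)
    (by rw [hq, ← pow_succ', hp])
end

section
/- Let α be a primitive element of GF(2^L) generated by a primitive polynomial of degree L ≥ 3, let p satisfy α^{p+1} = α^p + 1, and set q = 2p (mod 2^L - 1). Writing α^q and α^{q+1} in the basis {1, α, ..., α^{L-1}} with top coefficients c_{L-1} and c'_{L-1} respectively, one has c_{L-1} + c'_{L-1} = 1 (exactly one of α^q, α^{q+1} has α^{L-1} in its basis expansion). -/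
/-!
From `α ^ p * (1 + α) = 1` we get `α ^ q + α ^ (q + 1) = α ^ p * (α ^ p * (1 + α)) = α ^ p`, so
`c + c'` is the coordinate vector of `α ^ p = (1 + α)⁻¹`. If its top coordinate vanished, then
`α ^ p = P(α)` with `deg P < L - 1`, and `P * (1 + X) - 1` would be a polynomial of degree `< L`
killed by `α`. By linear independence of `1, α, …, α ^ (L - 1)` it would be zero, which is absurd
at `X = -1`.
-/

open Polynomial

theorem Polynomial.eq_zero_of_aeval_eq_zero_of_degree_lt {R A : Type*} [CommRing R] [Ring A]
    [Algebra R A] {x : A} {n : ℕ} (hx : LinearIndependent R fun j : Fin n => x ^ (j : ℕ))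
    {P : R[X]} (hdeg : P.degree < n) (hP : aeval x P = 0) : P = 0 := by
  by_contra hP0
  have hcoeff : ∀ j : Fin n, P.coeff j = 0 := by
    refine Fintype.linearIndependent_iff.mp hx (fun j => P.coeff j) ?_
    rw [← hP, aeval_eq_sum_range' ((natDegree_lt_iff_degree_lt hP0).mpr hdeg),
      Fin.sum_univ_eq_sum_range (fun j => P.coeff j • x ^ j)]
  refine hP0 (ext fun j => ?_)
  rcases lt_or_ge j n with hj | hj
  · exact hcoeff ⟨j, hj⟩
  · exact coeff_eq_zero_of_degree_lt (hdeg.trans_le (by exact_mod_cast hj))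

theorem Polynomial.degree_mul_one_add_X_sub_one_lt {K : Type*} [CommRing K] [Nontrivial K]
    {n : ℕ} {P : K[X]} (hP : P.degree < n) : (P * (1 + X) - 1).degree < ↑(n + 1) := by
  have hmul : (P * (1 + X)).degree < ↑(n + 1) :=
    calc (P * (1 + X)).degree ≤ P.degree + 1 :=
          (degree_mul_le _ _).trans (by gcongr; compute_degree)
      _ < ↑(n + 1) := by push_cast; exact WithBot.add_lt_add_right (by simp) hP
  exact (degree_sub_le _ _).trans_lt
    (max_lt hmul (degree_one_le.trans_lt (by exact_mod_cast n.succ_pos)))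

theorem coeff_last_ne_zero_of_mul_one_add_eq_one {K A : Type*} [CommRing K] [Nontrivial K]
    [Ring A] [Algebra K A] {x y : A} {n : ℕ}
    (hx : LinearIndependent K fun j : Fin (n + 1) => x ^ (j : ℕ))
    {d : Fin (n + 1) → K} (hy : y = ∑ j, d j • x ^ (j : ℕ)) (hinv : y * (1 + x) = 1) :
    d (Fin.last n) ≠ 0 := by
  intro hlast
  set P : K[X] := ∑ j : Fin n, C (d j.castSucc) * X ^ (j : ℕ)
  have hPy : aeval x P = y := by
    simp [P, hy, Fin.sum_univ_castSucc, hlast, Algebra.smul_def]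
  have hzero : P * (1 + X) - 1 = 0 :=
    eq_zero_of_aeval_eq_zero_of_degree_lt hx
      (degree_mul_one_add_X_sub_one_lt (degree_sum_fin_lt _)) (by simp [hPy, hinv])
  simpa using congrArg (eval (-1)) hzero

/-- With q = 2p mod (2^L - 1), exactly one of α^q, α^{q+1} has α^{L-1} in its
basis expansion: the top coefficients satisfy c_{L-1} + c'_{L-1} = 1. -/
theorem stmt6 {F : Type*} [Field F] [CharP F 2] [Algebra (ZMod 2) F] (L : ℕ)
    (hL : 3 ≤ L) (α : F) (hα : orderOf α = 2 ^ L - 1)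
    (hbasis : LinearIndependent (ZMod 2) fun j : Fin L => α ^ (j : ℕ))
    (p : ℕ) (hp : α ^ (p + 1) = α ^ p + 1) (q : ℕ) (hq : q = 2 * p % (2 ^ L - 1))
    (c c' : Fin L → ZMod 2)
    (hc : α ^ q = ∑ j : Fin L, c j • α ^ (j : ℕ))
    (hc' : α ^ (q + 1) = ∑ j : Fin L, c' j • α ^ (j : ℕ)) :
    c ⟨L - 1, by omega⟩ + c' ⟨L - 1, by omega⟩ = 1 := by
  obtain ⟨n, rfl⟩ : ∃ n, L = n + 1 := ⟨L - 1, by omega⟩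
  have hinv : α ^ p * (1 + α) = 1 := by
    rw [mul_one_add, ← pow_succ, hp, ← add_assoc, CharTwo.add_self_eq_zero, zero_add]
  have hq2 : α ^ q = α ^ (2 * p) := by rw [hq, ← hα, pow_mod_orderOf]
  have hsum : α ^ p = ∑ j, (c j + c' j) • α ^ (j : ℕ) := by
    simp only [add_smul, Finset.sum_add_distrib, ← hc, ← hc', pow_succ, hq2]
    rw [← mul_one_add, two_mul, pow_add, mul_assoc, hinv, mul_one]
  exact Fin.eq_one_of_ne_zero _ (coeff_last_ne_zero_of_mul_one_add_eq_one hbasis hsum hinv)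
end
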